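/- Let A be a unital *-algebra over C and J_min(A) the intersection of all kernels of *-representations. If a ∈ A satisfies a*a = 0, or a is normal (a*a = aa*) and nilpotent, or za = 0 for some nonzero z ∈ C, then a ∈ J_min(A). Moreover J_min(A) equals the intersection of kernels of all positive linear functionals of A. -/
import Mathlib


/-- An ordered ring in the sense of the paper. -/
structure PosCone (R : Type) [CommRing R] (P : Set R) : Prop where
  trichotomy : ∀ a : R, a ∈ P ∨ a = 0 ∨ -a ∈ P
  zero_not_mem : (0 : R) ∉ P
  not_neg_mem : ∀ a : R, a ∈ P → -a ∉ P
  add_mem : ∀ a b : R, a ∈ P → b ∈ P → a + b ∈ P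
  mul_mem : ∀ a b : R, a ∈ P → b ∈ P → a * b ∈ P

/-- The ring `C = R[i] = R(i)` obtained from `R` by adjoining a square root
of `-1`: elements are formal combinations `a + i b`. -/
@[ext] structure Cx (R : Type) : Type where
  re : R
  im : R

namespace Cx
variable {R : Type} [CommRing R]

instance : Zero (Cx R) := ⟨⟨0, 0⟩⟩
instance : One (Cx R) := ⟨⟨1, 0⟩⟩
instance : Add (Cx R) := ⟨fun z w => ⟨z.re + w.re, z.im + w.im⟩⟩
instance : Neg (Cx R) := ⟨fun z => ⟨-z.re, -z.im⟩⟩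
instance : Mul (Cx R) := ⟨fun z w => ⟨z.re * w.re - z.im * w.im, z.re * w.im + z.im * w.re⟩⟩

@[simp] theorem zero_re : (0 : Cx R).re = 0 := rfl
@[simp] theorem zero_im : (0 : Cx R).im = 0 := rfl
@[simp] theorem one_re : (1 : Cx R).re = 1 := rfl
@[simp] theorem one_im : (1 : Cx R).im = 0 := rfl
@[simp] theorem add_re (z w : Cx R) : (z + w).re = z.re + w.re := rfl
@[simp] theorem add_im (z w : Cx R) : (z + w).im = z.im + w.im := rfl
@[simp] theorem neg_re (z : Cx R) : (-z).re = -z.re := rfl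
@[simp] theorem neg_im (z : Cx R) : (-z).im = -z.im := rfl
@[simp] theorem mul_re (z w : Cx R) : (z * w).re = z.re * w.re - z.im * w.im := rfl
@[simp] theorem mul_im (z w : Cx R) : (z * w).im = z.re * w.im + z.im * w.re := rfl

instance : CommRing (Cx R) where
  add_assoc a b c := by ext <;> simp <;> ring
  zero_add a := by ext <;> simp
  add_zero a := by ext <;> simp
  add_comm a b := by ext <;> simp <;> ring
  left_distrib a b c := by ext <;> simp <;> ring
  right_distrib a b c := by ext <;> simp <;> ring
  zero_mul a := by ext <;> simp
  mul_zero a := by ext <;> simp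
  mul_assoc a b c := by ext <;> simp <;> ring
  one_mul a := by ext <;> simp
  mul_one a := by ext <;> simp
  neg_add_cancel a := by ext <;> simp
  mul_comm a b := by ext <;> simp <;> ring
  nsmul := nsmulRec
  zsmul := zsmulRec

/-- Complex conjugation `a + ib ↦ a - ib` on `C = R[i]`. -/
def conj (z : Cx R) : Cx R := ⟨z.re, -z.im⟩

/-- The imaginary unit `i` of `C = R[i]`. -/
def I : Cx R := ⟨0, 1⟩

end Cx

/-- The positive elements of `C = R[i]`: the elements of `P ⊆ R ⊆ C`. -/
def CxPos {R : Type} [CommRing R] (P : Set R) : Set (Cx R) :=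
  {z | z.im = 0 ∧ z.re ∈ P}

/-- The nonnegative elements of `C = R[i]`: elements of `P ∪ {0} ⊆ R ⊆ C`. -/
def CxNonneg {R : Type} [CommRing R] (P : Set R) : Set (Cx R) :=
  {z | z.im = 0 ∧ (z.re = 0 ∨ z.re ∈ P)}

/-- A pre-Hilbert space over `K` (with conjugation `conj` and positivity set
`Pos`): a `K`-module with a Hermitian, positive-definite inner product which
is `K`-linear in the second argument. -/
structure PreHilbert (K : Type) [CommRing K] (conj : K → K) (Pos : Set K)
    (H : Type) [AddCommGroup H] [Module K H] : Type where
  inner : H → H → K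
  inner_add_right : ∀ φ ψ χ : H, inner φ (ψ + χ) = inner φ ψ + inner φ χ
  inner_smul_right : ∀ (z : K) (φ ψ : H), inner φ (z • ψ) = z * inner φ ψ
  inner_conj : ∀ φ ψ : H, inner φ ψ = conj (inner ψ φ)
  inner_pos : ∀ φ : H, φ ≠ 0 → inner φ φ ∈ Pos

/-- A `*`-algebra over `K`: an associative unital `K`-algebra together with an
anti-linear involutive anti-automorphism `star`. -/
structure StarAlgebra (K : Type) [CommRing K] (conj : K → K)
    (A : Type) [Ring A] [Algebra K A] : Type where
  star : A → A
  star_add : ∀ a b : A, star (a + b) = star a + star b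
  star_mul : ∀ a b : A, star (a * b) = star b * star a
  star_star : ∀ a : A, star (star a) = a
  star_smul : ∀ (z : K) (a : A), star (z • a) = conj z • star a

/-- A `K`-linear functional `ω` on a `*`-algebra is positive if
`ω(a*a) ≥ 0` for all `a`. -/
def StarAlgebra.IsPositive {K : Type} [CommRing K] {conj : K → K}
    {A : Type} [Ring A] [Algebra K A] (sa : StarAlgebra K conj A)
    (Nonneg : Set K) (ω : A →ₗ[K] K) : Prop :=
  ∀ a : A, ω (sa.star a * a) ∈ Nonneg

/-- A `*`-representation of a `*`-algebra `A` over `C = R[i]` on a pre-Hilbert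
space over `C`: a `*`-homomorphism of `A` into the adjointable operators. -/
structure StarRep (R : Type) [CommRing R] (P : Set R)
    (A : Type) [Ring A] [Algebra (Cx R) A] (sa : StarAlgebra (Cx R) Cx.conj A) :
    Type 1 where
  H : Type
  [acg : AddCommGroup H]
  [mod : Module (Cx R) H]
  hp : PreHilbert (Cx R) Cx.conj (CxPos P) H
  π : A → H → H
  π_add : ∀ a b : A, π (a + b) = fun φ => π a φ + π b φ
  π_smul : ∀ (z : Cx R) (a : A), π (z • a) = fun φ => z • π a φ
  π_mul : ∀ a b : A, π (a * b) = fun φ => π a (π b φ)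
  π_one : π 1 = id
  map_add : ∀ (a : A) (φ ψ : H), π a (φ + ψ) = π a φ + π a ψ
  map_smul : ∀ (a : A) (z : Cx R) (φ : H), π a (z • φ) = z • π a φ
  adjoint : ∀ (a : A) (φ ψ : H), hp.inner (π a φ) ψ = hp.inner φ (π (sa.star a) ψ)

attribute [instance] StarRep.acg StarRep.mod

/-- The minimal ideal `J_min(A)`: the intersection of the kernels of all
`*`-representations of `A`. -/
def Jmin (R : Type) [CommRing R] (P : Set R)
    (A : Type) [Ring A] [Algebra (Cx R) A] (sa : StarAlgebra (Cx R) Cx.conj A) :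
    Set A :=
  {a : A | ∀ ρ : StarRep R P A sa, ∀ φ : ρ.H, ρ.π a φ = 0}

/-! ### Auxiliary lemmas -/

namespace Cx
variable {R : Type} [CommRing R]

@[simp] theorem conj_re (z : Cx R) : (conj z).re = z.re := rfl
@[simp] theorem conj_im (z : Cx R) : (conj z).im = -z.im := rfl
@[simp] theorem I_re : (I : Cx R).re = 0 := rfl
@[simp] theorem I_im : (I : Cx R).im = 1 := rfl

theorem conj_add' (z w : Cx R) : conj (z + w) = conj z + conj w := by
  ext <;> simp <;> ring

theorem conj_mul' (z w : Cx R) : conj (z * w) = conj z * conj w := by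
  ext <;> simp <;> ring

theorem conj_neg' (z : Cx R) : conj (-z) = -(conj z) := by ext <;> simp

theorem conj_conj' (z : Cx R) : conj (conj z) = z := by ext <;> simp

theorem conj_real {z : Cx R} (h : z.im = 0) : conj z = z := by ext <;> simp [h]

theorem neg_I_mul_I : (-I : Cx R) * I = 1 := by ext <;> simp

end Cx

section Aux

variable {R : Type} [CommRing R] [Nontrivial R] {P : Set R}

theorem PosCone.one_mem (hP : PosCone R P) : (1 : R) ∈ P := by
  rcases hP.trichotomy 1 with h | h | h
  · exact h
  · exact absurd h one_ne_zero
  · have h2 := hP.mul_mem _ _ h h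
    rw [neg_mul_neg, one_mul] at h2
    exact absurd h (hP.not_neg_mem _ h2)

theorem PosCone.nzd (hP : PosCone R P) {x r : R} (hr : r ∈ P) (h : x * r = 0) :
    x = 0 := by
  rcases hP.trichotomy x with hx | hx | hx
  · have := hP.mul_mem _ _ hx hr
    rw [h] at this
    exact absurd this hP.zero_not_mem
  · exact hx
  · have := hP.mul_mem _ _ hx hr
    rw [neg_mul, h, neg_zero] at this
    exact absurd this hP.zero_not_mem

theorem PosCone.sq_mem (hP : PosCone R P) {x : R} (hx : x ≠ 0) : x * x ∈ P := by
  rcases hP.trichotomy x with h | h | h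
  · exact hP.mul_mem _ _ h h
  · exact absurd h hx
  · have := hP.mul_mem _ _ h h
    rwa [neg_mul_neg] at this

theorem cx_zero_nonneg (hP : PosCone R P) : (0 : Cx R) ∈ CxNonneg P := ⟨rfl, Or.inl rfl⟩

theorem cx_pos_nonneg (hP : PosCone R P) {c : Cx R} (h : c ∈ CxPos P) :
    c ∈ CxNonneg P := ⟨h.1, Or.inr h.2⟩

theorem cx_nonneg_antisymm (hP : PosCone R P) {c : Cx R}
    (h1 : c ∈ CxNonneg P) (h2 : -c ∈ CxNonneg P) : c = 0 := by
  obtain ⟨hi, hr⟩ := h1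
  obtain ⟨hi2, hr2⟩ := h2
  ext
  · rcases hr with h | h
    · simpa using h
    · rcases hr2 with h' | h'
      · simp only [Cx.neg_re, neg_eq_zero] at h'
        simpa using h'
      · simp only [Cx.neg_re] at h'
        exact absurd h' (hP.not_neg_mem _ h)
  · simpa using hi

theorem cx_pos_neg_not_nonneg (hP : PosCone R P) {c : Cx R}
    (h : c ∈ CxPos P) (h2 : -c ∈ CxNonneg P) : False := by
  have := cx_nonneg_antisymm hP (cx_pos_nonneg hP h) h2
  rw [this] at h
  exact hP.zero_not_mem h.2

theorem cx_nonneg_mul (hP : PosCone R P) {c d : Cx R}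
    (hc : c ∈ CxNonneg P) (hd : d ∈ CxNonneg P) : c * d ∈ CxNonneg P := by
  obtain ⟨hc1, hc2⟩ := hc
  obtain ⟨hd1, hd2⟩ := hd
  refine ⟨by simp [hc1, hd1], ?_⟩
  simp only [Cx.mul_re, hc1, hd1, mul_zero, zero_mul, sub_zero]
  rcases hc2 with h | h
  · exact Or.inl (by rw [h, zero_mul])
  · rcases hd2 with h' | h'
    · exact Or.inl (by rw [h', mul_zero])
    · exact Or.inr (hP.mul_mem _ _ h h')

theorem cx_pos_nzd (hP : PosCone R P) {z c : Cx R} (hc : c ∈ CxPos P)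
    (h : z * c = 0) : z = 0 := by
  obtain ⟨h1, h2⟩ := hc
  have hre : (z * c).re = 0 := by rw [h]; rfl
  have him : (z * c).im = 0 := by rw [h]; rfl
  simp only [Cx.mul_re, Cx.mul_im, h1, mul_zero, sub_zero, add_zero, zero_add] at hre him
  ext
  · exact hP.nzd h2 hre
  · exact hP.nzd h2 him

theorem cx_norm_sq_pos (hP : PosCone R P) {u : Cx R} (hu : u ≠ 0) :
    u * Cx.conj u ∈ CxPos P := by
  refine ⟨by simp [mul_comm], ?_⟩
  have : (u * Cx.conj u).re = u.re * u.re + u.im * u.im := by simp [sub_neg_eq_add]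
  rw [this]
  by_cases hre : u.re = 0
  · have him : u.im ≠ 0 := fun h => hu (by ext <;> simp [hre, h])
    rw [hre, mul_zero, zero_add]
    exact hP.sq_mem him
  · by_cases him : u.im = 0
    · rw [him, mul_zero, add_zero]
      exact hP.sq_mem hre
    · exact hP.add_mem _ _ (hP.sq_mem hre) (hP.sq_mem him)

theorem cx_two_cancel (hP : PosCone R P) {c : Cx R} (h : c + c = 0) : c = 0 := by
  have h2 : (2 : R) ∈ P := by
    have := hP.add_mem _ _ hP.one_mem hP.one_mem
    norm_num at this ⊢
    exact this
  have hre : c.re + c.re = 0 := by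
    have := congrArg Cx.re h; simpa using this
  have him : c.im + c.im = 0 := by
    have := congrArg Cx.im h; simpa using this
  ext
  · exact hP.nzd h2 (by rw [mul_two]; exact hre)
  · exact hP.nzd h2 (by rw [mul_two]; exact him)

end Aux

section StarAux

variable {R : Type} [CommRing R] [Nontrivial R] {P : Set R}
variable {A : Type} [Ring A] [Algebra (Cx R) A]
variable (sa : StarAlgebra (Cx R) Cx.conj A)

theorem StarAlgebra.star_one : sa.star 1 = 1 := by
  have h := sa.star_mul (sa.star 1) 1
  rw [mul_one, sa.star_star] at h
  rw [mul_one] at h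
  exact h.symm

theorem StarAlgebra.star_pow (a : A) (n : ℕ) :
    sa.star (a ^ n) = sa.star a ^ n := by
  induction n with
  | zero => simpa using sa.star_one
  | succ n ih => rw [pow_succ, sa.star_mul, ih, ← pow_succ']

/-- Expansion of `ω((z a + w b)* (z a + w b))`. -/
theorem omega_expand (ω : A →ₗ[Cx R] Cx R) (z w : Cx R) (a b : A) :
    ω (sa.star (z • a + w • b) * (z • a + w • b)) =
      Cx.conj z * z * ω (sa.star a * a) + Cx.conj z * w * ω (sa.star a * b) +
      Cx.conj w * z * ω (sa.star b * a) + Cx.conj w * w * ω (sa.star b * b) := by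
  rw [sa.star_add, sa.star_smul, sa.star_smul, add_mul, mul_add, mul_add]
  simp only [smul_mul_assoc, mul_smul_comm, smul_smul, map_add, map_smul, smul_eq_mul]
  ring

/-- Positive functionals are Hermitian. -/
theorem omega_herm {ω : A →ₗ[Cx R] Cx R} (hω : sa.IsPositive (CxNonneg P) ω)
    (a b : A) : ω (sa.star b * a) = Cx.conj (ω (sa.star a * b)) := by
  have h1 : (ω (sa.star a * a)).im = 0 := (hω a).1
  have h2 : (ω (sa.star b * b)).im = 0 := (hω b).1
  have m1 := (hω ((1 : Cx R) • a + (1 : Cx R) • b)).1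
  rw [omega_expand sa ω] at m1
  have m2 := (hω ((1 : Cx R) • a + (Cx.I : Cx R) • b)).1
  rw [omega_expand sa ω] at m2
  set u := ω (sa.star a * b)
  set v := ω (sa.star b * a)
  simp only [Cx.add_im, Cx.mul_im, Cx.mul_re, Cx.conj_re, Cx.conj_im, Cx.one_re,
    Cx.one_im, Cx.I_re, Cx.I_im] at m1 m2
  ext
  · simp only [Cx.conj_re]
    linear_combination h1 + h2 - m2
  · simp only [Cx.conj_im]
    linear_combination m1 - h1 - h2

/-- Cauchy–Schwarz-type degeneracy: if `ω(a* a) = 0` then `ω(b* a) = 0`. -/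
theorem omega_cs (hP : PosCone R P) {ω : A →ₗ[Cx R] Cx R}
    (hω : sa.IsPositive (CxNonneg P) ω) {a : A}
    (ha : ω (sa.star a * a) = 0) (b : A) : ω (sa.star b * a) = 0 := by
  by_contra hv
  set v := ω (sa.star b * a) with hvdef
  set β := ω (sa.star b * b) with hbdef
  have hu : ω (sa.star a * b) = Cx.conj v := omega_herm sa hω b a
  have hβim : β.im = 0 := (hω b).1
  have hvv : v * Cx.conj v ∈ CxPos P := cx_norm_sq_pos hP hv
  -- Step 1: β = 0.
  have m1 := hω (β • a + (-v) • b)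
  rw [omega_expand sa ω, ha, hu, ← hvdef, ← hbdef] at m1
  have e1 : Cx.conj β * β * 0 + Cx.conj β * -v * Cx.conj v +
      Cx.conj (-v) * β * v + Cx.conj (-v) * -v * β = -(β * (v * Cx.conj v)) := by
    rw [Cx.conj_neg', Cx.conj_real hβim]
    ring
  rw [e1] at m1
  have hz : β * (v * Cx.conj v) = 0 :=
    cx_nonneg_antisymm hP (cx_nonneg_mul hP (hω b) (cx_pos_nonneg hP hvv)) m1
  have hβ0 : β = 0 := cx_pos_nzd hP hvv hz
  -- Step 2: contradiction.
  have m2 := hω ((1 : Cx R) • a + (-v) • b)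
  rw [omega_expand sa ω, ha, hu, ← hvdef, ← hbdef, hβ0] at m2
  have e2 : Cx.conj 1 * 1 * 0 + Cx.conj 1 * -v * Cx.conj v +
      Cx.conj (-v) * 1 * v + Cx.conj (-v) * -v * 0
      = -(v * Cx.conj v + v * Cx.conj v) := by
    rw [Cx.conj_neg']
    have : Cx.conj (1 : Cx R) = 1 := Cx.conj_real rfl
    rw [this]
    ring
  rw [e2] at m2
  have hpos2 : v * Cx.conj v + v * Cx.conj v ∈ CxPos P :=
    ⟨by rw [Cx.add_im, hvv.1, add_zero], hP.add_mem _ _ hvv.2 hvv.2⟩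
  exact cx_pos_neg_not_nonneg hP hpos2 m2

end StarAux

section RepAux

variable {R : Type} [CommRing R] [Nontrivial R] {P : Set R}
variable {A : Type} [Ring A] [Algebra (Cx R) A]
variable {sa : StarAlgebra (Cx R) Cx.conj A}

theorem StarRep.pi_zero (ρ : StarRep R P A sa) (φ : ρ.H) : ρ.π 0 φ = 0 := by
  have h := congrFun (ρ.π_smul 0 0) φ
  rw [zero_smul] at h
  rw [h, zero_smul]

theorem StarRep.pi_map_zero (ρ : StarRep R P A sa) (a : A) : ρ.π a 0 = 0 := by
  have h := ρ.map_smul a 0 0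
  rwa [zero_smul, zero_smul] at h

theorem StarRep.inner_zero_right (ρ : StarRep R P A sa) (φ : ρ.H) :
    ρ.hp.inner φ 0 = 0 := by
  have h := ρ.hp.inner_add_right φ 0 0
  rw [add_zero] at h
  exact (add_eq_left.mp h.symm)

theorem StarRep.inner_self_nonneg (hP : PosCone R P) (ρ : StarRep R P A sa)
    (φ : ρ.H) : ρ.hp.inner φ φ ∈ CxNonneg P := by
  by_cases h : φ = 0
  · rw [h, ρ.inner_zero_right]
    exact cx_zero_nonneg hP
  · exact cx_pos_nonneg hP (ρ.hp.inner_pos φ h)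

theorem StarRep.eq_zero_of_inner_self (hP : PosCone R P) (ρ : StarRep R P A sa)
    {φ : ρ.H} (h : ρ.hp.inner φ φ = 0) : φ = 0 := by
  by_contra hφ
  have h2 := ρ.hp.inner_pos φ hφ
  rw [h] at h2
  exact hP.zero_not_mem h2.2

theorem StarRep.inner_add_left (ρ : StarRep R P A sa) (φ ψ χ : ρ.H) :
    ρ.hp.inner (φ + ψ) χ = ρ.hp.inner φ χ + ρ.hp.inner ψ χ := by
  rw [ρ.hp.inner_conj, ρ.hp.inner_add_right, Cx.conj_add', ← ρ.hp.inner_conj,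
    ← ρ.hp.inner_conj]

theorem StarRep.inner_smul_left (ρ : StarRep R P A sa) (z : Cx R) (φ ψ : ρ.H) :
    ρ.hp.inner (z • φ) ψ = Cx.conj z * ρ.hp.inner φ ψ := by
  rw [ρ.hp.inner_conj, ρ.hp.inner_smul_right, Cx.conj_mul', ← ρ.hp.inner_conj]

end RepAux

section GNS

variable {R : Type} [CommRing R] [Nontrivial R] {P : Set R}
variable {A : Type} [Ring A] [Algebra (Cx R) A]

/-- The Gelfand ideal of a linear functional. -/
def gnsN (sa : StarAlgebra (Cx R) Cx.conj A) (ω : A →ₗ[Cx R] Cx R) :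
    Submodule (Cx R) A where
  carrier := {a | ∀ b, ω (sa.star b * a) = 0}
  add_mem' := by
    intro x y hx hy b
    rw [mul_add, map_add, hx b, hy b, add_zero]
  zero_mem' := by
    intro b
    rw [mul_zero, map_zero]
  smul_mem' := by
    intro z x hx b
    rw [mul_smul_comm, map_smul, hx b, smul_zero]

theorem mem_gnsN {sa : StarAlgebra (Cx R) Cx.conj A} {ω : A →ₗ[Cx R] Cx R}
    {x : A} : x ∈ gnsN sa ω ↔ ∀ b, ω (sa.star b * x) = 0 := Iff.rfl

/-- The GNS representation associated to a positive linear functional. -/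
def gnsRep (hP : PosCone R P) (sa : StarAlgebra (Cx R) Cx.conj A)
    (ω : A →ₗ[Cx R] Cx R) (hω : sa.IsPositive (CxNonneg P) ω) :
    StarRep R P A sa where
  H := A ⧸ gnsN sa ω
  hp :=
    { inner := fun φ ψ => Quotient.liftOn₂' φ ψ (fun x y => ω (sa.star x * y)) (by
        intro x y x' y' hx hy
        show ω (sa.star x * y) = ω (sa.star x' * y')
        have hx' : x - x' ∈ gnsN sa ω := (Submodule.quotientRel_def _).mp hx
        have hy' : y - y' ∈ gnsN sa ω := (Submodule.quotientRel_def _).mp hy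
        have step1 : ω (sa.star x * y) = ω (sa.star x * y') := by
          have := hy' x
          rw [mul_sub, map_sub, sub_eq_zero] at this
          exact this
        have step2 : ω (sa.star x * y') = ω (sa.star x' * y') := by
          have h0 := hx' y'
          rw [mul_sub, map_sub, sub_eq_zero] at h0
          rw [omega_herm sa hω y' x, omega_herm sa hω y' x', h0]
        rw [step1, step2])
      inner_add_right := by
        intro φ ψ χ
        induction φ using Quotient.inductionOn'
        induction ψ using Quotient.inductionOn'
        induction χ using Quotient.inductionOn'
        show ω (sa.star _ * (_ + _)) = ω (sa.star _ * _) + ω (sa.star _ * _)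
        rw [mul_add, map_add]
      inner_smul_right := by
        intro z φ ψ
        induction φ using Quotient.inductionOn'
        induction ψ using Quotient.inductionOn'
        show ω (sa.star _ * (z • _)) = z * ω (sa.star _ * _)
        rw [mul_smul_comm, map_smul, smul_eq_mul]
      inner_conj := by
        intro φ ψ
        induction φ using Quotient.inductionOn'
        induction ψ using Quotient.inductionOn'
        exact omega_herm sa hω _ _
      inner_pos := by
        intro φ hφ
        induction φ using Quotient.inductionOn' with | h x =>
        have hx : x ∉ gnsN sa ω := by
          intro hx
          exact hφ ((Submodule.Quotient.mk_eq_zero _).mpr hx)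
        have hxx : ω (sa.star x * x) ≠ 0 := by
          intro h0
          exact hx (fun b => omega_cs sa hP hω h0 b)
        have hnn : ω (sa.star x * x) ∈ CxNonneg P := hω x
        refine ⟨hnn.1, hnn.2.resolve_left ?_⟩
        intro hre
        apply hxx
        ext
        · exact hre
        · exact hnn.1 }
  π := fun c => Submodule.mapQ (gnsN sa ω) (gnsN sa ω) (LinearMap.mulLeft (Cx R) c)
    (by
      intro x hx
      intro b
      show ω (sa.star b * (c * x)) = 0
      have hstar : sa.star b * c = sa.star (sa.star c * b) := by
        rw [sa.star_mul, sa.star_star]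
      rw [← mul_assoc, hstar]
      exact hx (sa.star c * b))
  π_add := by
    intro a b
    funext φ
    induction φ using Quotient.inductionOn' with | h x =>
    show Submodule.Quotient.mk ((a + b) * x) =
      Submodule.Quotient.mk (a * x) + Submodule.Quotient.mk (b * x)
    rw [← Submodule.Quotient.mk_add, add_mul]
  π_smul := by
    intro z a
    funext φ
    induction φ using Quotient.inductionOn' with | h x =>
    show Submodule.Quotient.mk ((z • a) * x) = z • Submodule.Quotient.mk (a * x)
    rw [← Submodule.Quotient.mk_smul, smul_mul_assoc]
  π_mul := by
    intro a b
    funext φ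
    induction φ using Quotient.inductionOn' with | h x =>
    show Submodule.Quotient.mk ((a * b) * x) = Submodule.Quotient.mk (a * (b * x))
    rw [mul_assoc]
  π_one := by
    funext φ
    induction φ using Quotient.inductionOn' with | h x =>
    show Submodule.Quotient.mk (1 * x) = Submodule.Quotient.mk x
    rw [one_mul]
  map_add := fun a φ ψ => map_add (Submodule.mapQ _ _ _ _) φ ψ
  map_smul := fun a z φ => map_smul (Submodule.mapQ _ _ _ _) z φ
  adjoint := by
    intro a φ ψ
    induction φ using Quotient.inductionOn' with | h x =>
    induction ψ using Quotient.inductionOn' with | h y =>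
    show ω (sa.star (a * x) * y) = ω (sa.star x * (sa.star a * y))
    rw [sa.star_mul, mul_assoc]

theorem gnsRep_pi_mk (hP : PosCone R P) (sa : StarAlgebra (Cx R) Cx.conj A)
    (ω : A →ₗ[Cx R] Cx R) (hω : sa.IsPositive (CxNonneg P) ω) (c x : A) :
    (gnsRep hP sa ω hω).π c (Submodule.Quotient.mk x) =
      (Submodule.Quotient.mk (c * x) : A ⧸ gnsN sa ω) := rfl

end GNS

section NormalAux

variable {R : Type} [CommRing R] [Nontrivial R] {P : Set R}
variable {A : Type} [Ring A] [Algebra (Cx R) A]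
variable {sa : StarAlgebra (Cx R) Cx.conj A}

/-- A normal element whose square kills a vector already kills it. -/
theorem normal_step (hP : PosCone R P) (ρ : StarRep R P A sa) {b : A}
    (hb : sa.star b * b = b * sa.star b) {φ : ρ.H}
    (h : ρ.π b (ρ.π b φ) = 0) : ρ.π b φ = 0 := by
  set c := sa.star b * b with hc
  have hcstar : sa.star c = c := by rw [hc, sa.star_mul, sa.star_star]
  have hcc : c * c = sa.star (b * b) * (b * b) := by
    rw [sa.star_mul]
    calc (sa.star b * b) * (sa.star b * b)
        = sa.star b * ((b * sa.star b) * b) := by rw [mul_assoc, mul_assoc]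
      _ = sa.star b * ((sa.star b * b) * b) := by rw [← hb]
      _ = sa.star b * sa.star b * (b * b) := by rw [mul_assoc, mul_assoc]
  have hbb : ρ.π (b * b) φ = 0 := (congrFun (ρ.π_mul b b) φ).trans h
  have hccφ : ρ.π c (ρ.π c φ) = 0 := by
    calc ρ.π c (ρ.π c φ) = ρ.π (c * c) φ := (congrFun (ρ.π_mul c c) φ).symm
      _ = ρ.π (sa.star (b * b)) (ρ.π (b * b) φ) := by
          rw [hcc]; exact congrFun (ρ.π_mul _ _) φ
      _ = ρ.π (sa.star (b * b)) 0 := by rw [hbb]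
      _ = 0 := ρ.pi_map_zero _
  have hcφ : ρ.π c φ = 0 := by
    apply ρ.eq_zero_of_inner_self hP
    rw [ρ.adjoint c φ (ρ.π c φ), hcstar, hccφ, ρ.inner_zero_right]
  apply ρ.eq_zero_of_inner_self hP
  calc ρ.hp.inner (ρ.π b φ) (ρ.π b φ)
      = ρ.hp.inner φ (ρ.π (sa.star b) (ρ.π b φ)) := ρ.adjoint b φ _
    _ = ρ.hp.inner φ (ρ.π (sa.star b * b) φ) :=
        congrArg (ρ.hp.inner φ) (congrFun (ρ.π_mul _ _) φ).symm
    _ = ρ.hp.inner φ 0 := by rw [← hc, hcφ]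
    _ = 0 := ρ.inner_zero_right φ

/-- Descent: if some power of a normal element acts as zero, so does it. -/
theorem normal_descent (hP : PosCone R P) (ρ : StarRep R P A sa) {a : A}
    (hnorm : sa.star a * a = a * sa.star a) :
    ∀ n : ℕ, (∀ φ : ρ.H, ρ.π (a ^ n) φ = 0) → ∀ φ : ρ.H, ρ.π a φ = 0 := by
  intro n
  induction n using Nat.strong_induction_on with
  | _ n ih =>
    intro h φ
    match n, ih, h with
    | 0, ih, h =>
      have h0 : φ = 0 := by
        have := h φ
        rwa [pow_zero, congrFun ρ.π_one φ] at this
      rw [h0, ρ.pi_map_zero]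
    | 1, ih, h =>
      have := h φ
      rwa [pow_one] at this
    | (k + 2), ih, h =>
      have hcomm : Commute (sa.star a) a := hnorm
      have hmnorm : sa.star (a ^ ((k + 3) / 2)) * a ^ ((k + 3) / 2)
          = a ^ ((k + 3) / 2) * sa.star (a ^ ((k + 3) / 2)) := by
        rw [sa.star_pow]
        exact hcomm.pow_pow _ _
      have hkill : ∀ ψ : ρ.H, ρ.π (a ^ ((k + 3) / 2)) ψ = 0 := by
        intro ψ
        apply normal_step hP ρ hmnorm
        have hsplit : a ^ ((k + 3) / 2) * a ^ ((k + 3) / 2)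
            = a ^ (2 * ((k + 3) / 2) - (k + 2)) * a ^ (k + 2) := by
          rw [← pow_add, ← pow_add]
          congr 1
          omega
        calc ρ.π (a ^ ((k + 3) / 2)) (ρ.π (a ^ ((k + 3) / 2)) ψ)
            = ρ.π (a ^ ((k + 3) / 2) * a ^ ((k + 3) / 2)) ψ :=
              (congrFun (ρ.π_mul _ _) ψ).symm
          _ = ρ.π (a ^ (2 * ((k + 3) / 2) - (k + 2))) (ρ.π (a ^ (k + 2)) ψ) := by
              rw [hsplit]; exact congrFun (ρ.π_mul _ _) ψ
          _ = ρ.π (a ^ (2 * ((k + 3) / 2) - (k + 2))) 0 := by rw [h ψ]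
          _ = 0 := ρ.pi_map_zero _
      exact ih ((k + 3) / 2) (by omega) hkill φ

end NormalAux

/-- for a unital `*`-algebra `A` over `C = R[i]`, if `a*a = 0`,
or `a` is normal and nilpotent, or `za = 0` for some nonzero scalar `z`, then
`a ∈ J_min(A)`; moreover `J_min(A)` is exactly the common kernel of all
positive linear functionals of `A`. -/
theorem jmin_characterization (R : Type) [CommRing R] [Nontrivial R] (P : Set R)
    (hP : PosCone R P)
    (A : Type) [Ring A] [Algebra (Cx R) A]
    (sa : StarAlgebra (Cx R) Cx.conj A) :
    (∀ a : A, sa.star a * a = 0 → a ∈ Jmin R P A sa) ∧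
    (∀ a : A, sa.star a * a = a * sa.star a → (∃ n : ℕ, a ^ n = 0) →
      a ∈ Jmin R P A sa) ∧
    (∀ (z : Cx R) (a : A), z ≠ 0 → z • a = 0 → a ∈ Jmin R P A sa) ∧
    Jmin R P A sa
      = {a : A | ∀ ω : A →ₗ[Cx R] Cx R, sa.IsPositive (CxNonneg P) ω → ω a = 0} := by
  refine ⟨?_, ?_, ?_, ?_⟩
  -- Part 1: a*a = 0
  · intro a ha ρ φ
    apply ρ.eq_zero_of_inner_self hP
    calc ρ.hp.inner (ρ.π a φ) (ρ.π a φ)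
        = ρ.hp.inner φ (ρ.π (sa.star a) (ρ.π a φ)) := ρ.adjoint a φ _
      _ = ρ.hp.inner φ (ρ.π (sa.star a * a) φ) :=
          congrArg (ρ.hp.inner φ) (congrFun (ρ.π_mul _ _) φ).symm
      _ = ρ.hp.inner φ 0 := by rw [ha, ρ.pi_zero]
      _ = 0 := ρ.inner_zero_right φ
  -- Part 2: normal nilpotent
  · rintro a hnorm ⟨n, hn⟩ ρ φ
    refine normal_descent hP ρ hnorm n (fun ψ => ?_) φ
    rw [hn, ρ.pi_zero]
  -- Part 3: torsion
  · intro z a hz ha ρ φ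
    by_contra hv
    have hpos := ρ.hp.inner_pos (ρ.π a φ) hv
    have hzv : z • ρ.π a φ = 0 := by
      rw [← congrFun (ρ.π_smul z a) φ, ha, ρ.pi_zero]
    have hmul : z * ρ.hp.inner (ρ.π a φ) (ρ.π a φ) = 0 := by
      rw [← ρ.hp.inner_smul_right, hzv, ρ.inner_zero_right]
    exact hz (cx_pos_nzd hP hpos hmul)
  -- Part 4: Jmin = common kernel of positive functionals
  · ext a
    constructor
    · intro ha ω hω
      have h1 := ha (gnsRep hP sa ω hω)
        (Submodule.Quotient.mk (1 : A) : A ⧸ gnsN sa ω)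
      rw [gnsRep_pi_mk] at h1
      have h2 : a * 1 ∈ gnsN sa ω := (Submodule.Quotient.mk_eq_zero _).mp h1
      have h3 := h2 (1 : A)
      rwa [sa.star_one, one_mul, mul_one] at h3
    · intro ha ρ φ
      -- the positive functionals coming from vectors
      have hB : ∀ ψ : ρ.H, ρ.hp.inner ψ (ρ.π a ψ) = 0 := by
        intro ψ
        refine ha
          { toFun := fun b => ρ.hp.inner ψ (ρ.π b ψ)
            map_add' := fun b c => by
              show ρ.hp.inner ψ (ρ.π (b + c) ψ)
                = ρ.hp.inner ψ (ρ.π b ψ) + ρ.hp.inner ψ (ρ.π c ψ)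
              rw [congrFun (ρ.π_add b c) ψ]
              exact ρ.hp.inner_add_right _ _ _
            map_smul' := fun z b => by
              show ρ.hp.inner ψ (ρ.π (z • b) ψ) = z * ρ.hp.inner ψ (ρ.π b ψ)
              rw [congrFun (ρ.π_smul z b) ψ]
              exact ρ.hp.inner_smul_right _ _ _ } ?_
        intro b
        show ρ.hp.inner ψ (ρ.π (sa.star b * b) ψ) ∈ CxNonneg P
        have e : ρ.hp.inner ψ (ρ.π (sa.star b * b) ψ)
            = ρ.hp.inner (ρ.π b ψ) (ρ.π b ψ) := by
          rw [ρ.adjoint b ψ (ρ.π b ψ)]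
          exact congrArg (ρ.hp.inner ψ) (congrFun (ρ.π_mul _ _) ψ)
        rw [e]
        exact ρ.inner_self_nonneg hP _
      -- polarization
      have hB2 : ∀ φ ψ : ρ.H, ρ.hp.inner φ (ρ.π a ψ) = 0 := by
        intro φ ψ
        have hsum : ρ.hp.inner φ (ρ.π a ψ) + ρ.hp.inner ψ (ρ.π a φ) = 0 := by
          have h0 := hB (φ + ψ)
          rw [ρ.map_add, ρ.inner_add_left, ρ.hp.inner_add_right,
            ρ.hp.inner_add_right, hB φ, hB ψ] at h0
          linear_combination h0
        have hanti : ρ.hp.inner φ (ρ.π a ψ) = ρ.hp.inner ψ (ρ.π a φ) := by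
          have h0 := hB (φ + (Cx.I : Cx R) • ψ)
          rw [ρ.map_add, ρ.map_smul, ρ.inner_add_left, ρ.hp.inner_add_right,
            ρ.hp.inner_add_right, ρ.inner_smul_left, ρ.inner_smul_left,
            ρ.hp.inner_smul_right, ρ.hp.inner_smul_right, hB φ, hB ψ] at h0
          have hconjI : Cx.conj (Cx.I : Cx R) = -Cx.I := by ext <;> simp
          rw [hconjI] at h0
          -- h0 : 0 + I * B φ ψ + (-I * B ψ φ + -I * (I * 0)) = 0
          have h1 : Cx.I * (ρ.hp.inner φ (ρ.π a ψ) - ρ.hp.inner ψ (ρ.π a φ)) = 0 := by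
            linear_combination h0
          have h2 := congrArg (fun t => (-Cx.I : Cx R) * t) h1
          simp only [mul_zero] at h2
          rw [← mul_assoc, Cx.neg_I_mul_I, one_mul] at h2
          exact sub_eq_zero.mp h2
        apply cx_two_cancel hP
        rw [hanti] at hsum ⊢
        linear_combination hsum
      apply ρ.eq_zero_of_inner_self hP
      exact hB2 (ρ.π a φ) φ
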